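/- Let α, β ∈ ½ℕ₀ be half-integers and set m = α − β and p = α + β + 1, so that p + m and p − m are positive integers. Consider the space V(m) and the six operators of ρ(m,p) defined by the formulas of the infinite-dimensional representations (with spins γ ranging over {|m|, |m|+1, |m|+2, …}). Then: (a) since C_p = 0, the finite-dimensional subspace W = span{ v^γ_k : |m| ≤ γ ≤ p−1, −γ ≤ k ≤ γ } of V(m) is invariant under all six operators H₃, H₊, H₋, F₃, F₊, F₋, so the restrictions define a finite-dimensional representation of the Lorentz Lie algebra on W; (b) this representation is irreducible: the only subspaces of W invariant under all six operators are {0} and W. -/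

import Mathlib

/-!
STATEMENT 15: For half-integers α, β ∈ ½ℕ₀, set m = α − β, p = α + β + 1. On V(m)
(spins γ ∈ {|m|, |m|+1, …}, now half-integers) consider the six operators of ρ(m,p).
Since C_p = 0, the finite-dimensional subspace W spanned by the v^γ_k with γ ≤ p−1 is
invariant under all six operators (a), and the resulting finite-dimensional
representation of the Lorentz Lie algebra on W is irreducible (b).

Half-integers are represented by *doubled* integer values: a = 2α, b = 2β, m2 = 2m,
p2 = 2p, and the basis vectors v^γ_k are indexed by the doubled values g = 2γ, k' = 2k.
-/

open Complex

noncomputable section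

/-- Index set: doubled spins `g = 2γ` with `γ ∈ |m| + ℕ₀` and doubled weights
`k' = 2k` with `k ∈ {−γ, −γ+1, …, γ}`. `m2 = 2m` is the doubled minimal spin. -/
abbrev WIdx (m2 : ℤ) : Type :=
  {x : ℤ × ℤ // |m2| ≤ x.1 ∧ |x.2| ≤ x.1 ∧ 2 ∣ (x.1 - m2) ∧ 2 ∣ (x.1 - x.2)}

/-- `V(m)`: the free complex vector space on the basis `{v^γ_k}` (doubled indices). -/
abbrev Vhalf (m2 : ℤ) : Type := WIdx m2 →₀ ℂ

/-- The basis vector `v^γ_k` (`g = 2γ`, `k' = 2k`), zero for invalid indices. -/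
def bw (m2 g k : ℤ) : Vhalf m2 :=
  if h : |m2| ≤ g ∧ |k| ≤ g ∧ 2 ∣ (g - m2) ∧ 2 ∣ (g - k) then
    Finsupp.single ⟨(g, k), h⟩ 1 else 0

/-- Nonnegative real square root, as a complex number. -/
def sqr (x : ℝ) : ℂ := ((Real.sqrt x : ℝ) : ℂ)

/-- The half of a doubled value, as a real number: `γ = g/2`. -/
def hf (g : ℤ) : ℝ := (g : ℝ) / 2

/-- `B_γ = i p m / (γ(γ+1))` (with `B_0 = 0`); all parameters doubled. -/
def Bhalf (m2 p2 : ℤ) (g : ℤ) : ℂ :=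
  if g = 0 then 0
  else Complex.I * ((p2 : ℂ) / 2) * ((m2 : ℂ) / 2) /
    (((g : ℂ) / 2) * ((g : ℂ) / 2 + 1))

/-- `H₃ v^γ_k = k v^γ_k`. -/
def hopH3 (m2 : ℤ) : Module.End ℂ (Vhalf m2) :=
  Finsupp.lift (Vhalf m2) ℂ (WIdx m2) fun x => ((hf x.1.2 : ℝ) : ℂ) • bw m2 x.1.1 x.1.2

/-- `H₋ v^γ_k = √((γ+k)(γ−k+1)) v^γ_{k−1}`. -/
def hopHm (m2 : ℤ) : Module.End ℂ (Vhalf m2) :=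
  Finsupp.lift (Vhalf m2) ℂ (WIdx m2) fun x =>
    sqr ((hf x.1.1 + hf x.1.2) * (hf x.1.1 - hf x.1.2 + 1)) • bw m2 x.1.1 (x.1.2 - 2)

/-- `H₊ v^γ_k = √((γ+k+1)(γ−k)) v^γ_{k+1}`. -/
def hopHp (m2 : ℤ) : Module.End ℂ (Vhalf m2) :=
  Finsupp.lift (Vhalf m2) ℂ (WIdx m2) fun x =>
    sqr ((hf x.1.1 + hf x.1.2 + 1) * (hf x.1.1 - hf x.1.2)) • bw m2 x.1.1 (x.1.2 + 2)

/-- `F₊ v^γ_k = C_γ √((γ−k)(γ−k−1)) v^{γ−1}_{k+1} − B_γ √((γ+k+1)(γ−k)) v^γ_{k+1}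
    + C_{γ+1} √((γ+k+1)(γ+k+2)) v^{γ+1}_{k+1}`. -/
def hopFp (m2 p2 : ℤ) (C : ℤ → ℂ) : Module.End ℂ (Vhalf m2) :=
  Finsupp.lift (Vhalf m2) ℂ (WIdx m2) fun x =>
    (C x.1.1 * sqr ((hf x.1.1 - hf x.1.2) * (hf x.1.1 - hf x.1.2 - 1)))
        • bw m2 (x.1.1 - 2) (x.1.2 + 2)
    - (Bhalf m2 p2 x.1.1 * sqr ((hf x.1.1 + hf x.1.2 + 1) * (hf x.1.1 - hf x.1.2)))
        • bw m2 x.1.1 (x.1.2 + 2)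
    + (C (x.1.1 + 2) * sqr ((hf x.1.1 + hf x.1.2 + 1) * (hf x.1.1 + hf x.1.2 + 2)))
        • bw m2 (x.1.1 + 2) (x.1.2 + 2)

/-- `F₋ v^γ_k = −C_γ √((γ+k)(γ+k−1)) v^{γ−1}_{k−1} − B_γ √((γ−k+1)(γ+k)) v^γ_{k−1}
    − C_{γ+1} √((γ+1−k)(γ+1+k)) v^{γ+1}_{k−1}`. -/
def hopFm (m2 p2 : ℤ) (C : ℤ → ℂ) : Module.End ℂ (Vhalf m2) :=
  Finsupp.lift (Vhalf m2) ℂ (WIdx m2) fun x =>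
    -((C x.1.1 * sqr ((hf x.1.1 + hf x.1.2) * (hf x.1.1 + hf x.1.2 - 1)))
        • bw m2 (x.1.1 - 2) (x.1.2 - 2))
    - (Bhalf m2 p2 x.1.1 * sqr ((hf x.1.1 - hf x.1.2 + 1) * (hf x.1.1 + hf x.1.2)))
        • bw m2 x.1.1 (x.1.2 - 2)
    - (C (x.1.1 + 2) * sqr ((hf x.1.1 + 1 - hf x.1.2) * (hf x.1.1 + 1 + hf x.1.2)))
        • bw m2 (x.1.1 + 2) (x.1.2 - 2)

/-- `F₃ v^γ_k = C_γ √((γ−k)(γ+k)) v^{γ−1}_k − B_γ k v^γ_k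
    − C_{γ+1} √((γ+1−k)(γ+1+k)) v^{γ+1}_k`. -/
def hopF3 (m2 p2 : ℤ) (C : ℤ → ℂ) : Module.End ℂ (Vhalf m2) :=
  Finsupp.lift (Vhalf m2) ℂ (WIdx m2) fun x =>
    (C x.1.1 * sqr ((hf x.1.1 - hf x.1.2) * (hf x.1.1 + hf x.1.2))) • bw m2 (x.1.1 - 2) x.1.2
    - (Bhalf m2 p2 x.1.1 * ((hf x.1.2 : ℝ) : ℂ)) • bw m2 x.1.1 x.1.2
    - (C (x.1.1 + 2) * sqr ((hf x.1.1 + 1 - hf x.1.2) * (hf x.1.1 + 1 + hf x.1.2)))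
        • bw m2 (x.1.1 + 2) x.1.2

/-- The equations `C_γ² = −(γ²−p²)(γ²−m²)/(γ²(4γ²−1))` for `γ ≥ |m|+1`
(all values doubled). -/
def CsqHalf (m2 p2 : ℤ) (C : ℤ → ℂ) : Prop :=
  ∀ g : ℤ, |m2| + 2 ≤ g →
    C g ^ 2 = -((((g : ℂ) / 2) ^ 2 - ((p2 : ℂ) / 2) ^ 2) *
        (((g : ℂ) / 2) ^ 2 - ((m2 : ℂ) / 2) ^ 2)) /
      (((g : ℂ) / 2) ^ 2 * (4 * ((g : ℂ) / 2) ^ 2 - 1))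

/-- The span `W` of the basis vectors `v^γ_k` with `|m| ≤ γ ≤ p − 1`. -/
def Wsub (m2 p2 : ℤ) : Submodule ℂ (Vhalf m2) :=
  Submodule.span ℂ {w : Vhalf m2 | ∃ g k : ℤ, g ≤ p2 - 2 ∧ w = bw m2 g k}

section Infra
variable {m2 p2 : ℤ}

/-- Validity predicate for doubled indices. -/
def Vld (m2 g k : ℤ) : Prop := |m2| ≤ g ∧ |k| ≤ g ∧ 2 ∣ (g - m2) ∧ 2 ∣ (g - k)

lemma bw_pos {g k : ℤ} (h : Vld m2 g k) :
    bw m2 g k = Finsupp.single (⟨(g, k), h⟩ : WIdx m2) 1 := dif_pos h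

lemma bw_neg {g k : ℤ} (h : ¬ Vld m2 g k) : bw m2 g k = 0 := dif_neg h

lemma bw_eq_single (x : WIdx m2) : bw m2 x.1.1 x.1.2 = Finsupp.single x 1 := dif_pos x.2

lemma lift_single (f : WIdx m2 → Vhalf m2) (x : WIdx m2) :
    Finsupp.lift (Vhalf m2) ℂ (WIdx m2) f (Finsupp.single x 1) = f x := by
  simp [Finsupp.lift_apply, Finsupp.sum_single_index]

lemma hopH3_bw {g k : ℤ} (h : Vld m2 g k) :
    hopH3 m2 (bw m2 g k) = ((hf k : ℝ) : ℂ) • bw m2 g k := by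
  conv_lhs => rw [bw_pos h]
  exact lift_single _ _

lemma hopHp_bw {g k : ℤ} (h : Vld m2 g k) :
    hopHp m2 (bw m2 g k) = sqr ((hf g + hf k + 1) * (hf g - hf k)) • bw m2 g (k + 2) := by
  conv_lhs => rw [bw_pos h]
  exact lift_single _ _

lemma hopHm_bw {g k : ℤ} (h : Vld m2 g k) :
    hopHm m2 (bw m2 g k) = sqr ((hf g + hf k) * (hf g - hf k + 1)) • bw m2 g (k - 2) := by
  conv_lhs => rw [bw_pos h]
  exact lift_single _ _

lemma hopFp_bw (C : ℤ → ℂ) {g k : ℤ} (h : Vld m2 g k) :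
    hopFp m2 p2 C (bw m2 g k) =
      (C g * sqr ((hf g - hf k) * (hf g - hf k - 1))) • bw m2 (g - 2) (k + 2)
      - (Bhalf m2 p2 g * sqr ((hf g + hf k + 1) * (hf g - hf k))) • bw m2 g (k + 2)
      + (C (g + 2) * sqr ((hf g + hf k + 1) * (hf g + hf k + 2))) • bw m2 (g + 2) (k + 2) := by
  conv_lhs => rw [bw_pos h]
  exact lift_single _ _

lemma hopFm_bw (C : ℤ → ℂ) {g k : ℤ} (h : Vld m2 g k) :
    hopFm m2 p2 C (bw m2 g k) =
      -((C g * sqr ((hf g + hf k) * (hf g + hf k - 1))) • bw m2 (g - 2) (k - 2))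
      - (Bhalf m2 p2 g * sqr ((hf g - hf k + 1) * (hf g + hf k))) • bw m2 g (k - 2)
      - (C (g + 2) * sqr ((hf g + 1 - hf k) * (hf g + 1 + hf k))) • bw m2 (g + 2) (k - 2) := by
  conv_lhs => rw [bw_pos h]
  exact lift_single _ _

lemma hopF3_bw (C : ℤ → ℂ) {g k : ℤ} (h : Vld m2 g k) :
    hopF3 m2 p2 C (bw m2 g k) =
      (C g * sqr ((hf g - hf k) * (hf g + hf k))) • bw m2 (g - 2) k
      - (Bhalf m2 p2 g * ((hf k : ℝ) : ℂ)) • bw m2 g k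
      - (C (g + 2) * sqr ((hf g + 1 - hf k) * (hf g + 1 + hf k))) • bw m2 (g + 2) k := by
  conv_lhs => rw [bw_pos h]
  exact lift_single _ _

end Infra
section Infra2
variable {m2 p2 : ℤ}

lemma hf_le {g k : ℤ} (h : g ≤ k) : hf g ≤ hf k := by
  unfold hf; have : (g:ℝ) ≤ k := by exact_mod_cast h
  linarith

lemma hf_lt {g k : ℤ} (h : g < k) : hf g < hf k := by
  unfold hf; have : (g:ℝ) < k := by exact_mod_cast h
  linarith

lemma hf_inj {g k : ℤ} (h : hf g = hf k) : g = k := by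
  unfold hf at h
  have : (g:ℝ) = k := by linarith
  exact_mod_cast this

lemma hf_add (g j : ℤ) : hf (g + j) = hf g + hf j := by
  unfold hf; push_cast; ring

lemma hf_sub (g j : ℤ) : hf (g - j) = hf g - hf j := by
  unfold hf; push_cast; ring

lemma hf_two : hf 2 = 1 := by norm_num [hf]

lemma sqr_mul_self {a : ℝ} (h : 0 ≤ a) : sqr a * sqr a = (a : ℂ) := by
  rw [sqr, ← Complex.ofReal_mul, Real.mul_self_sqrt h]

lemma sqr_ne_zero {a : ℝ} (h : 0 < a) : sqr a ≠ 0 := by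
  rw [sqr, Complex.ofReal_ne_zero]
  exact (Real.sqrt_ne_zero'.mpr h)

lemma sqr_zero : sqr 0 = 0 := by simp [sqr]

lemma mem_of_smul_mem {W' : Submodule ℂ (Vhalf m2)} {c : ℂ} (hc : c ≠ 0) {u : Vhalf m2}
    (h : c • u ∈ W') : u ∈ W' := by
  have := W'.smul_mem c⁻¹ h
  rwa [smul_smul, inv_mul_cancel₀ hc, one_smul] at this

lemma diag_apply (T : Module.End ℂ (Vhalf m2)) (d : WIdx m2 → ℂ)
    (h : ∀ x, T (Finsupp.single x 1) = d x • Finsupp.single x 1)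
    (v : Vhalf m2) (z : WIdx m2) : T v z = d z * v z := by
  induction v using Finsupp.induction_linear with
  | zero => simp
  | add f g hf hg => rw [map_add, Finsupp.add_apply, hf, hg, Finsupp.add_apply]; ring
  | single a c =>
    have h1 : Finsupp.single a c = c • Finsupp.single a 1 := by
      rw [Finsupp.smul_single, smul_eq_mul, mul_one]
    rw [h1, map_smul, h a, smul_smul]
    simp only [Finsupp.smul_apply, smul_eq_mul, Finsupp.single_apply]
    by_cases hz : a = z
    · simp [hz]; ring
    · simp [hz]

/-- Casimir operator of the rotation subalgebra. -/
def casop (m2 : ℤ) : Module.End ℂ (Vhalf m2) :=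
  hopHm m2 * hopHp m2 + hopH3 m2 * hopH3 m2 + hopH3 m2

lemma casop_single (x : WIdx m2) :
    casop m2 (Finsupp.single x 1) =
      ((hf x.1.1 * (hf x.1.1 + 1) : ℝ) : ℂ) • Finsupp.single x 1 := by
  obtain ⟨⟨g, k⟩, hx⟩ := x
  have hv : Vld m2 g k := hx
  have hbw : bw m2 g k = Finsupp.single (⟨(g, k), hx⟩ : WIdx m2) 1 := bw_pos hv
  rw [show (⟨(g,k),hx⟩ : WIdx m2).1.1 = g from rfl]
  rw [casop]
  simp only [LinearMap.add_apply, Module.End.mul_apply]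
  rw [← hbw, hopH3_bw hv, map_smul, hopH3_bw hv, hopHp_bw hv]
  have hkg : k ≤ g := le_of_abs_le hv.2.1
  have hgk : -g ≤ k := neg_le_of_abs_le hv.2.1
  by_cases hke : k = g
  · have hz : (hf g + hf k + 1) * (hf g - hf k) = 0 := by rw [hke]; ring
    rw [hz, sqr_zero, zero_smul, map_zero, hbw, smul_smul, zero_add, ← add_smul]
    congr 1
    rw [hke]
    push_cast [hf]
    ring
  · have hk2 : Vld m2 g (k + 2) := by
      refine ⟨hv.1, ?_, hv.2.2.1, ?_⟩
      · rw [abs_le]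
        constructor
        · omega
        · -- k + 2 ≤ g using parity
          obtain ⟨t, ht⟩ := hv.2.2.2
          omega
      · obtain ⟨t, ht⟩ := hv.2.2.2
        exact ⟨t - 1, by omega⟩
    rw [map_smul, hopHm_bw hk2]
    rw [show k + 2 - 2 = k from by ring, hbw]
    rw [hf_add, hf_two]
    rw [smul_smul, smul_smul, ← add_smul, ← add_smul]
    congr 1
    have e1 : hf g + (hf k + 1) = hf g + hf k + 1 := by ring
    have e2 : hf g - (hf k + 1) + 1 = hf g - hf k := by ring
    rw [e1, e2]
    rw [sqr_mul_self]
    · push_cast [hf]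
      ring
    · have h1 : (0:ℝ) ≤ hf g + hf k + 1 := by
        have := hf_le hgk; rw [show hf (-g) = -hf g from by unfold hf; push_cast; ring] at this
        linarith
      have h2 : (0:ℝ) ≤ hf g - hf k := by have := hf_le hkg; linarith
      positivity

lemma casop_apply (v : Vhalf m2) (z : WIdx m2) :
    casop m2 v z = ((hf z.1.1 * (hf z.1.1 + 1) : ℝ) : ℂ) * v z :=
  diag_apply _ _ casop_single v z

lemma hopH3_apply (v : Vhalf m2) (z : WIdx m2) :
    hopH3 m2 v z = ((hf z.1.2 : ℝ) : ℂ) * v z := by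
  refine diag_apply _ (fun z => ((hf z.1.2 : ℝ) : ℂ)) (fun x => ?_) v z
  have := hopH3_bw (m2 := m2) x.2
  rwa [bw_eq_single] at this

end Infra2
section Infra3
variable {m2 p2 : ℤ} {C : ℤ → ℂ}

lemma C_ne (hC : CsqHalf m2 p2 C) {g : ℤ} (h1 : |m2| + 2 ≤ g) (h2 : g ≤ p2 - 2) :
    C g ≠ 0 := by
  intro h0
  have habs : (0:ℤ) ≤ |m2| := abs_nonneg m2
  have hg2 : (2:ℤ) ≤ g := by omega
  have hmlt : |m2| < g := by omega
  have hmlt' : -g < m2 ∧ m2 < g := abs_lt.mp hmlt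
  have heq := hC g h1
  rw [h0] at heq
  have hA : (((g : ℂ) / 2) ^ 2 - ((p2 : ℂ) / 2) ^ 2) ≠ 0 := by
    intro h
    have h' : ((g:ℂ))^2 = ((p2:ℂ))^2 := by linear_combination 4 * h
    have hz : (g:ℤ)^2 = p2^2 := by exact_mod_cast h'
    nlinarith
  have hB : (((g : ℂ) / 2) ^ 2 - ((m2 : ℂ) / 2) ^ 2) ≠ 0 := by
    intro h
    have h' : ((g:ℂ))^2 = ((m2:ℂ))^2 := by linear_combination 4 * h
    have hz : (g:ℤ)^2 = m2^2 := by exact_mod_cast h'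
    nlinarith [hmlt'.1, hmlt'.2]
  have hD : (((g : ℂ) / 2) ^ 2 * (4 * ((g : ℂ) / 2) ^ 2 - 1)) ≠ 0 := by
    refine mul_ne_zero (pow_ne_zero _ (div_ne_zero ?_ two_ne_zero)) ?_
    · exact_mod_cast (by omega : (g:ℤ) ≠ 0)
    · intro h
      have h' : ((g:ℂ))^2 = 1 := by linear_combination h
      have hz : (g:ℤ)^2 = 1 := by exact_mod_cast h'
      nlinarith
  have : (0:ℂ) = _ := (zero_pow two_ne_zero).symm.trans heq
  exact (div_ne_zero (neg_ne_zero.mpr (mul_ne_zero hA hB)) hD) this.symm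

lemma C_p2_eq_zero (hC : CsqHalf m2 p2 C) (h : |m2| + 2 ≤ p2) : C p2 = 0 := by
  have heq := hC p2 h
  rw [sub_self, zero_mul, neg_zero, zero_div] at heq
  exact pow_eq_zero_iff two_ne_zero |>.mp heq

lemma bw_mem_W {g k : ℤ} (h : g ≤ p2 - 2) : bw m2 g k ∈ Wsub m2 p2 :=
  Submodule.subset_span ⟨g, k, h, rfl⟩

lemma Wsub_supported :
    Wsub m2 p2 ≤ Finsupp.supported ℂ ℂ {z : WIdx m2 | z.1.1 ≤ p2 - 2} := by
  rw [Wsub, Submodule.span_le]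
  rintro w ⟨g, k, hg, rfl⟩
  by_cases h : Vld m2 g k
  · rw [bw_pos h]
    exact Finsupp.single_mem_supported ℂ 1 hg
  · rw [bw_neg h]
    exact Submodule.zero_mem _

end Infra3
section Infra4
variable {m2 p2 : ℤ}

lemma hf_zero : hf 0 = 0 := by norm_num [hf]

lemma sep_aux (W' : Submodule ℂ (Vhalf m2))
    (h3 : ∀ x ∈ W', hopH3 m2 x ∈ W')
    (hp : ∀ x ∈ W', hopHp m2 x ∈ W')
    (hm : ∀ x ∈ W', hopHm m2 x ∈ W') :
    ∀ n : ℕ, ∀ v ∈ W', v.support.card ≤ n → ∀ z ∈ v.support,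
      Finsupp.single z (v z) ∈ W' := by
  have hcas : ∀ x ∈ W', casop m2 x ∈ W' := by
    intro x hx
    exact add_mem (add_mem (hm _ (hp _ hx)) (h3 _ (h3 _ hx))) (h3 _ hx)
  intro n
  induction n with
  | zero =>
    intro v hv hc z hz
    rw [Nat.le_zero, Finset.card_eq_zero] at hc
    rw [hc] at hz; exact absurd hz (Finset.notMem_empty z)
  | succ n ih =>
    intro v hv hc z hz
    by_cases hone : ∀ y ∈ v.support, y = z
    · have hv' : v = Finsupp.single z (v z) := by
        ext u
        rw [Finsupp.single_apply]
        by_cases hu : z = u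
        · rw [← hu]
          simp
        · simp only [hu, if_false]
          by_contra h0
          exact hu ((hone u (Finsupp.mem_support_iff.mpr h0)).symm)
      rw [← hv']
      exact hv
    · push_neg at hone
      obtain ⟨y, hy, hyz⟩ := hone
      have hsep : ∃ T : Module.End ℂ (Vhalf m2), ∃ d : WIdx m2 → ℂ,
          (∀ u w, T w u = d u * w u) ∧ (∀ x ∈ W', T x ∈ W') ∧ d y ≠ d z := by
        by_cases hk : y.1.2 = z.1.2
        · refine ⟨casop m2, fun u => ((hf u.1.1 * (hf u.1.1 + 1) : ℝ) : ℂ),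
            fun u w => casop_apply w u, hcas, ?_⟩
          have hgy : (0:ℤ) ≤ y.1.1 := le_trans (abs_nonneg _) y.2.2.1
          have hgz : (0:ℤ) ≤ z.1.1 := le_trans (abs_nonneg _) z.2.2.1
          have h0y : (0:ℝ) ≤ hf y.1.1 := by have := hf_le hgy; rwa [hf_zero] at this
          have h0z : (0:ℝ) ≤ hf z.1.1 := by have := hf_le hgz; rwa [hf_zero] at this
          have hgne : y.1.1 ≠ z.1.1 := by
            intro h; exact hyz (Subtype.ext (Prod.ext h hk))
          intro h
          rw [Complex.ofReal_inj] at h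
          have : hf y.1.1 = hf z.1.1 := by
            by_contra hcon
            rcases lt_or_gt_of_ne hcon with hlt | hlt
            · nlinarith
            · nlinarith
          exact hgne (hf_inj this)
        · refine ⟨hopH3 m2, fun u => ((hf u.1.2 : ℝ) : ℂ),
            fun u w => hopH3_apply w u, h3, ?_⟩
          intro h
          rw [Complex.ofReal_inj] at h
          exact hk (hf_inj h)
      obtain ⟨T, d, hdiag, hT, hne⟩ := hsep
      set w := T v - d y • v with hw
      have hwW : w ∈ W' := sub_mem (hT v hv) (Submodule.smul_mem _ _ hv)
      have hwapp : ∀ u, w u = (d u - d y) * v u := by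
        intro u
        rw [hw, Finsupp.sub_apply, Finsupp.smul_apply, hdiag, smul_eq_mul]; ring
      have hsupp : w.support ⊆ v.support.erase y := by
        intro u hu
        rw [Finsupp.mem_support_iff, hwapp] at hu
        refine Finset.mem_erase.mpr ⟨?_,
          Finsupp.mem_support_iff.mpr fun h0 => hu (by rw [h0, mul_zero])⟩
        rintro rfl
        exact hu (by rw [sub_self, zero_mul])
      have hcard : w.support.card ≤ n := by
        have := Finset.card_le_card hsupp
        rw [Finset.card_erase_of_mem hy] at this
        omega
      have hdz : d z - d y ≠ 0 := sub_ne_zero.mpr (Ne.symm hne)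
      have hzw : z ∈ w.support := by
        rw [Finsupp.mem_support_iff, hwapp]
        exact mul_ne_zero hdz (Finsupp.mem_support_iff.mp hz)
      have hrec := ih w hwW hcard z hzw
      have heq : Finsupp.single z (v z) = (d z - d y)⁻¹ • Finsupp.single z (w z) := by
        rw [hwapp, Finsupp.smul_single, smul_eq_mul, ← mul_assoc, inv_mul_cancel₀ hdz, one_mul]
      rw [heq]
      exact Submodule.smul_mem _ _ hrec

end Infra4
section Infra5
variable {m2 p2 : ℤ} {C : ℤ → ℂ}

lemma level_all (W' : Submodule ℂ (Vhalf m2))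
    (hp : ∀ x ∈ W', hopHp m2 x ∈ W')
    (hm : ∀ x ∈ W', hopHm m2 x ∈ W')
    {g k0 : ℤ} (hval : Vld m2 g k0) (h0 : bw m2 g k0 ∈ W') :
    ∀ k : ℤ, bw m2 g k ∈ W' := by
  obtain ⟨hm1, hk1, hd1, hd2⟩ := hval
  have hk1' : -g ≤ k0 ∧ k0 ≤ g := abs_le.mp hk1
  have up : ∀ n : ℕ, bw m2 g (k0 + 2 * (n:ℤ)) ∈ W' := by
    intro n
    induction n with
    | zero => simpa using h0
    | succ n ih =>
      have hrw : k0 + 2 * ((n:ℤ) + 1) = (k0 + 2 * (n:ℤ)) + 2 := by ring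
      push_cast
      rw [hrw]
      set j := k0 + 2 * (n:ℤ) with hj
      by_cases hvj : Vld m2 g (j + 2)
      · have hj2 : -g ≤ j + 2 ∧ j + 2 ≤ g := abs_le.mp hvj.2.1
        have hdj : 2 ∣ (g - j) := by
          obtain ⟨t, ht⟩ := hvj.2.2.2
          exact ⟨t + 1, by omega⟩
        have hvld : Vld m2 g j := ⟨hm1, abs_le.mpr ⟨by omega, by omega⟩, hd1, hdj⟩
        have happ := hopHp_bw (m2 := m2) hvld
        have hlt : hf j < hf g := hf_lt (by omega)
        have hge : -(hf g) ≤ hf j := by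
          have := hf_le (show -g ≤ j by omega)
          rwa [show hf (-g) = -(hf g) from by unfold hf; push_cast; ring] at this
        have hcoe : sqr ((hf g + hf j + 1) * (hf g - hf j)) ≠ 0 :=
          sqr_ne_zero (mul_pos (by linarith) (by linarith))
        refine mem_of_smul_mem hcoe ?_
        rw [← happ]
        exact hp _ ih
      · rw [bw_neg hvj]
        exact Submodule.zero_mem _
  have down : ∀ n : ℕ, bw m2 g (k0 - 2 * (n:ℤ)) ∈ W' := by
    intro n
    induction n with
    | zero => simpa using h0
    | succ n ih =>
      have hrw : k0 - 2 * ((n:ℤ) + 1) = (k0 - 2 * (n:ℤ)) - 2 := by ring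
      push_cast
      rw [hrw]
      set j := k0 - 2 * (n:ℤ) with hj
      by_cases hvj : Vld m2 g (j - 2)
      · have hj2 : -g ≤ j - 2 ∧ j - 2 ≤ g := abs_le.mp hvj.2.1
        have hdj : 2 ∣ (g - j) := by
          obtain ⟨t, ht⟩ := hvj.2.2.2
          exact ⟨t - 1, by omega⟩
        have hvld : Vld m2 g j := ⟨hm1, abs_le.mpr ⟨by omega, by omega⟩, hd1, hdj⟩
        have happ := hopHm_bw (m2 := m2) hvld
        have hlt : -(hf g) < hf j := by
          have := hf_lt (show -g < j by omega)
          rwa [show hf (-g) = -(hf g) from by unfold hf; push_cast; ring] at this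
        have hle : hf j ≤ hf g := hf_le (by omega)
        have hcoe : sqr ((hf g + hf j) * (hf g - hf j + 1)) ≠ 0 :=
          sqr_ne_zero (mul_pos (by linarith) (by linarith))
        refine mem_of_smul_mem hcoe ?_
        rw [← happ]
        exact hm _ ih
      · rw [bw_neg hvj]
        exact Submodule.zero_mem _
  intro k
  by_cases hv : Vld m2 g k
  · have hpar : 2 ∣ (k - k0) := by
      obtain ⟨t, ht⟩ := hd2
      obtain ⟨s, hs⟩ := hv.2.2.2
      exact ⟨t - s, by omega⟩
    by_cases hk : k0 ≤ k
    · have hrw : k = k0 + 2 * (((k - k0) / 2).toNat : ℤ) := by omega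
      rw [hrw]; exact up _
    · have hrw : k = k0 - 2 * (((k0 - k) / 2).toNat : ℤ) := by omega
      rw [hrw]; exact down _
  · rw [bw_neg hv]
    exact Submodule.zero_mem _

end Infra5
section Infra6
variable {m2 p2 : ℤ} {C : ℤ → ℂ}

lemma hf_nonneg {g : ℤ} (h : 0 ≤ g) : 0 ≤ hf g := by
  have := hf_le h; rwa [hf_zero] at this

lemma up_level (W' : Submodule ℂ (Vhalf m2))
    (hp : ∀ x ∈ W', hopHp m2 x ∈ W')
    (hm : ∀ x ∈ W', hopHm m2 x ∈ W')
    (hFp : ∀ x ∈ W', hopFp m2 p2 C x ∈ W')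
    (hC : CsqHalf m2 p2 C)
    {g : ℤ} (hg1 : |m2| ≤ g) (hpar : 2 ∣ (g - m2)) (hg2 : g + 2 ≤ p2 - 2)
    (hlev : ∀ k, bw m2 g k ∈ W') :
    ∀ k, bw m2 (g + 2) k ∈ W' := by
  have habs : (0:ℤ) ≤ |m2| := abs_nonneg m2
  have hvgg : Vld m2 g g := ⟨hg1, abs_le.mpr ⟨by omega, le_refl g⟩, hpar, ⟨0, by ring⟩⟩
  have happ := hopFp_bw (m2 := m2) (p2 := p2) C hvgg
  rw [sub_self, zero_mul, sqr_zero, mul_zero, zero_smul, mul_zero, sqr_zero,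
    mul_zero, zero_smul, zero_sub, neg_zero, zero_add] at happ
  have h0g : (0:ℝ) ≤ hf g := hf_nonneg (by omega)
  have hcne : C (g + 2) * sqr ((hf g + hf g + 1) * (hf g + hf g + 2)) ≠ 0 :=
    mul_ne_zero (C_ne hC (by omega) hg2)
      (sqr_ne_zero (mul_pos (by linarith) (by linarith)))
  have hmem : bw m2 (g + 2) (g + 2) ∈ W' := by
    refine mem_of_smul_mem hcne ?_
    rw [← happ]
    exact hFp _ (hlev g)
  have hvld : Vld m2 (g + 2) (g + 2) := by
    obtain ⟨t, ht⟩ := hpar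
    exact ⟨by omega, abs_le.mpr ⟨by omega, le_refl _⟩, ⟨t + 1, by omega⟩, ⟨0, by ring⟩⟩
  exact level_all W' hp hm hvld hmem

lemma down_level (W' : Submodule ℂ (Vhalf m2))
    (hp : ∀ x ∈ W', hopHp m2 x ∈ W')
    (hm : ∀ x ∈ W', hopHm m2 x ∈ W')
    (hF3 : ∀ x ∈ W', hopF3 m2 p2 C x ∈ W')
    (hC : CsqHalf m2 p2 C)
    {g : ℤ} (hg1 : |m2| + 2 ≤ g) (hpar : 2 ∣ (g - m2)) (hg2 : g ≤ p2 - 2)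
    (hlev : ∀ k, bw m2 g k ∈ W')
    (htop : ∀ k : ℤ, (C (g + 2) * sqr ((hf g + 1 - hf k) * (hf g + 1 + hf k)))
      • bw m2 (g + 2) k ∈ W') :
    ∀ k, bw m2 (g - 2) k ∈ W' := by
  have habs : (0:ℤ) ≤ |m2| := abs_nonneg m2
  have hvk : Vld m2 g (g - 2) := ⟨hg1.trans' (by omega), abs_le.mpr ⟨by omega, by omega⟩,
    hpar, ⟨1, by ring⟩⟩
  have happ := hopF3_bw (m2 := m2) (p2 := p2) C hvk
  have hA : (C g * sqr ((hf g - hf (g - 2)) * (hf g + hf (g - 2)))) • bw m2 (g - 2) (g - 2)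
      = hopF3 m2 p2 C (bw m2 g (g - 2))
        + (Bhalf m2 p2 g * ((hf (g - 2) : ℝ) : ℂ)) • bw m2 g (g - 2)
        + (C (g + 2) * sqr ((hf g + 1 - hf (g - 2)) * (hf g + 1 + hf (g - 2))))
            • bw m2 (g + 2) (g - 2) := by
    rw [happ]; abel
  have hmemA : (C g * sqr ((hf g - hf (g - 2)) * (hf g + hf (g - 2))))
      • bw m2 (g - 2) (g - 2) ∈ W' := by
    rw [hA]
    exact add_mem (add_mem (hF3 _ (hlev _)) (Submodule.smul_mem _ _ (hlev _))) (htop _)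
  have h1g : (1:ℝ) ≤ hf g := by
    have := hf_le (show (2:ℤ) ≤ g by omega); rwa [hf_two] at this
  have hrw2 : hf (g - 2) = hf g - 1 := by rw [hf_sub, hf_two]
  have hcne : C g * sqr ((hf g - hf (g - 2)) * (hf g + hf (g - 2))) ≠ 0 := by
    refine mul_ne_zero (C_ne hC hg1 hg2) (sqr_ne_zero ?_)
    rw [hrw2]
    nlinarith
  have hmem : bw m2 (g - 2) (g - 2) ∈ W' := mem_of_smul_mem hcne hmemA
  have hvld : Vld m2 (g - 2) (g - 2) := by
    obtain ⟨t, ht⟩ := hpar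
    exact ⟨by omega, abs_le.mpr ⟨by omega, le_refl _⟩, ⟨t - 1, by omega⟩, ⟨0, by ring⟩⟩
  exact level_all W' hp hm hvld hmem

end Infra6
theorem statement15 (a b : ℕ) (m2 p2 : ℤ) (hm2 : m2 = (a : ℤ) - (b : ℤ))
    (hp2 : p2 = (a : ℤ) + (b : ℤ) + 2)
    (C : ℤ → ℂ) (hC : CsqHalf m2 p2 C) (hC0 : C |m2| = 0) :
    ((∀ x ∈ Wsub m2 p2, hopH3 m2 x ∈ Wsub m2 p2) ∧
     (∀ x ∈ Wsub m2 p2, hopHp m2 x ∈ Wsub m2 p2) ∧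
     (∀ x ∈ Wsub m2 p2, hopHm m2 x ∈ Wsub m2 p2) ∧
     (∀ x ∈ Wsub m2 p2, hopF3 m2 p2 C x ∈ Wsub m2 p2) ∧
     (∀ x ∈ Wsub m2 p2, hopFp m2 p2 C x ∈ Wsub m2 p2) ∧
     (∀ x ∈ Wsub m2 p2, hopFm m2 p2 C x ∈ Wsub m2 p2)) ∧
    (∀ W' : Submodule ℂ (Vhalf m2), W' ≤ Wsub m2 p2 →
      (∀ x ∈ W', hopH3 m2 x ∈ W') →
      (∀ x ∈ W', hopHp m2 x ∈ W') →
      (∀ x ∈ W', hopHm m2 x ∈ W') →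
      (∀ x ∈ W', hopF3 m2 p2 C x ∈ W') →
      (∀ x ∈ W', hopFp m2 p2 C x ∈ W') →
      (∀ x ∈ W', hopFm m2 p2 C x ∈ W') →
      W' = ⊥ ∨ W' = Wsub m2 p2) := by
  have hmabs : |m2| ≤ (a:ℤ) + b := by
    rw [hm2]; rcases abs_cases ((a:ℤ) - b) with ⟨h, _⟩ | ⟨h, _⟩ <;> omega
  have habs : (0:ℤ) ≤ |m2| := abs_nonneg m2
  have hmp : |m2| + 2 ≤ p2 := by omega
  have hCp2 : C p2 = 0 := C_p2_eq_zero hC hmp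
  have hdvd : (2:ℤ) ∣ (p2 - m2) := ⟨(b:ℤ) + 1, by omega⟩
  -- the key fact: the raising term never escapes W
  have hup : ∀ g k : ℤ, Vld m2 g k → g ≤ p2 - 2 → ∀ c : ℂ, ∀ k' : ℤ,
      (C (g + 2) * c) • bw m2 (g + 2) k' ∈ Wsub m2 p2 := by
    intro g k hv hg c k'
    by_cases hgt : g + 2 ≤ p2 - 2
    · exact Submodule.smul_mem _ _ (bw_mem_W hgt)
    · obtain ⟨t, ht⟩ := hv.2.2.1
      obtain ⟨s, hs⟩ := hdvd
      have : g + 2 = p2 := by omega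
      rw [this, hCp2, zero_mul, zero_smul]
      exact Submodule.zero_mem _
  constructor
  · refine ⟨?_, ?_, ?_, ?_, ?_, ?_⟩ <;>
    · intro x hx
      refine Submodule.span_induction ?_ ?_ ?_ ?_ hx
      · rintro w ⟨g, k, hg, rfl⟩
        by_cases h : Vld m2 g k
        · first
          | (rw [hopH3_bw h]; exact Submodule.smul_mem _ _ (bw_mem_W hg))
          | (rw [hopHp_bw h]; exact Submodule.smul_mem _ _ (bw_mem_W hg))
          | (rw [hopHm_bw h]; exact Submodule.smul_mem _ _ (bw_mem_W hg))
          | (rw [hopF3_bw C h]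
             exact sub_mem (sub_mem (Submodule.smul_mem _ _ (bw_mem_W (by omega)))
               (Submodule.smul_mem _ _ (bw_mem_W hg))) (hup g k h hg _ _))
          | (rw [hopFp_bw C h]
             exact add_mem (sub_mem (Submodule.smul_mem _ _ (bw_mem_W (by omega)))
               (Submodule.smul_mem _ _ (bw_mem_W hg))) (hup g k h hg _ _))
          | (rw [hopFm_bw C h]
             exact sub_mem (sub_mem (neg_mem (Submodule.smul_mem _ _ (bw_mem_W (by omega))))
               (Submodule.smul_mem _ _ (bw_mem_W hg))) (hup g k h hg _ _))
        · rw [bw_neg h, map_zero]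
          exact Submodule.zero_mem _
      · rw [map_zero]; exact Submodule.zero_mem _
      · intro u v _ _ hu hv; rw [map_add]; exact add_mem hu hv
      · intro c u _ hu; rw [map_smul]; exact Submodule.smul_mem _ _ hu
  · intro W' hle h3 hp hm hF3 hFp hFm
    by_cases hbot : W' = ⊥
    · exact Or.inl hbot
    right
    obtain ⟨v, hv, hv0⟩ := Submodule.exists_mem_ne_zero_of_ne_bot hbot
    obtain ⟨z, hz⟩ := Finsupp.support_nonempty_iff.mpr hv0
    have hsingle : Finsupp.single z (v z) ∈ W' :=
      sep_aux W' h3 hp hm v.support.card v hv le_rfl z hz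
    have hvz : v z ≠ 0 := Finsupp.mem_support_iff.mp hz
    have hone : Finsupp.single z 1 ∈ W' := by
      have h := Submodule.smul_mem W' (v z)⁻¹ hsingle
      rwa [Finsupp.smul_single, smul_eq_mul, inv_mul_cancel₀ hvz] at h
    have hbw0 : bw m2 z.1.1 z.1.2 ∈ W' := by rw [bw_eq_single]; exact hone
    have hzb : z.1.1 ≤ p2 - 2 :=
      (Finsupp.mem_supported ℂ v).mp (Wsub_supported (hle hv)) hz
    set g0 := z.1.1 with hg0
    have hzv : Vld m2 g0 z.1.2 := z.2
    obtain ⟨t0, ht0⟩ := hzv.2.2.1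
    have hlev0 : ∀ k, bw m2 g0 k ∈ W' := level_all W' hp hm hzv hbw0
    have hupn : ∀ n : ℕ, g0 + 2 * (n:ℤ) ≤ p2 - 2 → ∀ k, bw m2 (g0 + 2 * (n:ℤ)) k ∈ W' := by
      intro n
      induction n with
      | zero => intro _ k; simpa using hlev0 k
      | succ n ih =>
        intro hb k
        push_cast at hb ⊢
        have hb' : g0 + 2 * (n:ℤ) ≤ p2 - 2 := by omega
        have hrw : g0 + 2 * ((n:ℤ) + 1) = (g0 + 2 * (n:ℤ)) + 2 := by ring
        rw [hrw]
        exact up_level W' hp hm hFp hC (by omega) ⟨t0 + n, by omega⟩ (by omega) (ih hb') k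
    have hpar0 : (2:ℤ) ∣ (p2 - 2 - g0) := by
      obtain ⟨s, hs⟩ := hdvd
      exact ⟨s - 1 - t0, by omega⟩
    have htopl : ∀ k, bw m2 (p2 - 2) k ∈ W' := by
      obtain ⟨N, hN⟩ := hpar0
      have hN0 : 0 ≤ N := by omega
      have hrw : p2 - 2 = g0 + 2 * ((N.toNat : ℤ)) := by omega
      rw [hrw]
      exact hupn N.toNat (by omega)
    have hdown : ∀ n : ℕ, ∀ k, bw m2 (p2 - 2 - 2 * (n:ℤ)) k ∈ W' := by
      intro n
      induction n using Nat.strong_induction_on with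
      | _ n ih =>
        obtain _ | m := n
        · simpa using htopl
        intro k
        push_cast
        have hrw : p2 - 2 - 2 * ((m:ℤ) + 1) = (p2 - 2 - 2 * (m:ℤ)) - 2 := by ring
        rw [hrw]
        set gp := p2 - 2 - 2 * (m:ℤ) with hgp
        have hlevp : ∀ k, bw m2 gp k ∈ W' := by
          have := ih m (by omega)
          simpa using this
        by_cases hcase : |m2| + 2 ≤ gp
        · refine down_level W' hp hm hF3 hC hcase ?_ (by omega) hlevp ?_ k
          · obtain ⟨s, hs⟩ := hdvd
            exact ⟨s - 1 - m, by omega⟩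
          · intro k'
            obtain _ | l := m
            · have : gp + 2 = p2 := by omega
              rw [this, hCp2, zero_mul, zero_smul]
              exact Submodule.zero_mem _
            · have hlevpp := ih l (by omega)
              have : gp + 2 = p2 - 2 - 2 * (l:ℤ) := by push_cast [hgp]; ring
              rw [this]
              exact Submodule.smul_mem _ _ (hlevpp k')
        · rw [bw_neg (fun hvld => absurd hvld.1 (by omega))]
          exact Submodule.zero_mem _
    refine le_antisymm hle ?_
    rw [Wsub, Submodule.span_le]
    rintro w ⟨g, k, hg, rfl⟩
    simp only [SetLike.mem_coe]
    by_cases h : Vld m2 g k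
    · obtain ⟨t, ht⟩ := h.2.2.1
      obtain ⟨s, hs⟩ := hdvd
      have hg0' : |m2| ≤ g := h.1
      have hrw : g = p2 - 2 - 2 * (((p2 - 2 - g) / 2).toNat : ℤ) := by omega
      rw [hrw]
      exact hdown _ k
    · rw [bw_neg h]
      exact Submodule.zero_mem _
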